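/- Fix an integer k ≥ 2. For each subset S ⊆ [k] with |S| ≥ 2 let B_S be the Reutenauer basis of L_S, and for each singleton S = {a} let B_S = {a}; fix any total order ≤ on the disjoint union B = ⊔_{∅ ≠ S ⊆ [k]} B_S. Then the set Π of all products P_1 P_2 ⋯ P_m, taken over all set partitions [k] = S_1 ⊔ S_2 ⊔ ⋯ ⊔ S_m and all choices P_i ∈ B_{S_i} with P_1 < P_2 < ⋯ < P_m in the chosen order, is a ℤ-basis of C_{k−1}^{(k)}, the free ℤ-module on injective words of length k in [k]. -/

import Mathlib

noncomputable section

/-- The free associative `R`-algebra on noncommuting generators labelled by `Fin k`,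
realized as the monoid algebra on the free monoid. -/
abbrev FA (R : Type) [CommRing R] (k : ℕ) : Type := MonoidAlgebra R (FreeMonoid (Fin k))

/-- A word in the letters `Fin k`, as an element of the free associative algebra. -/
def wordElem (R : Type) [CommRing R] (k : ℕ) (w : List (Fin k)) : FA R k :=
  MonoidAlgebra.single (FreeMonoid.ofList w) 1

/-- `C_{n-1}^{(k)}`: the free `R`-submodule spanned by the injective words of length `n`. -/
def wordsLen (R : Type) [CommRing R] (k n : ℕ) : Submodule R (FA R k) :=
  Submodule.span R {x | ∃ w : List (Fin k), w.Nodup ∧ w.length = n ∧ x = wordElem R k w}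

/-- Alternating sum of letter deletions of a single word. -/
def Dword (R : Type) [CommRing R] (k : ℕ) (w : List (Fin k)) : FA R k :=
  ∑ j : Fin w.length, ((-1 : R) ^ (j : ℕ)) • wordElem R k (w.eraseIdx (j : ℕ))

/-- The differential `D`, extended linearly to the whole free algebra. -/
def Ddiff (R : Type) [CommRing R] (k : ℕ) : FA R k →ₗ[R] FA R k :=
  (Finsupp.lsum R fun w : FreeMonoid (Fin k) =>
    LinearMap.toSpanSingleton R (FA R k) (Dword R k (FreeMonoid.toList w)))
    ∘ₗ (MonoidAlgebra.coeffLinearEquiv (M := FreeMonoid (Fin k)) (S := R) R).toLinearMap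

/-- `IsLie R k S x`: `x` is an iterated graded Lie bracket of the letters of `S`, every
letter of `S` appearing exactly once.  Here `[p, q] = pq - (-1)^(|p||q|) qp`. -/
inductive IsLie (R : Type) [CommRing R] (k : ℕ) : Finset (Fin k) → FA R k → Prop
  | letter (a : Fin k) : IsLie R k {a} (wordElem R k [a])
  | bracket {S T : Finset (Fin k)} {p q : FA R k} (hST : Disjoint S T)
      (hp : IsLie R k S p) (hq : IsLie R k T q) :
      IsLie R k (S ∪ T) (p * q - ((-1 : R) ^ (S.card * T.card)) • (q * p))

/-- An `L`-product: a product `P₁ ⋯ P_m` over a set partition `[k] = S₁ ⊔ ⋯ ⊔ S_m`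
with each `P i` in the submodule `L_{S i}` (so every block has at least two elements). -/
def IsLProduct (R : Type) [CommRing R] (k : ℕ) (x : FA R k) : Prop :=
  ∃ (m : ℕ) (S : Fin m → Finset (Fin k)) (P : Fin m → FA R k),
    (∀ i, 2 ≤ (S i).card) ∧
    (∀ i, P i ∈ Submodule.span R {y : FA R k | IsLie R k (S i) y}) ∧
    (∀ i j, i ≠ j → Disjoint (S i) (S j)) ∧
    Finset.univ.biUnion S = (Finset.univ : Finset (Fin k)) ∧
    x = (List.ofFn P).prod

/-- Auxiliary recursion for left-normed brackets. -/
def lbrkAux (R : Type) [CommRing R] (k : ℕ) : FA R k → ℕ → List (Fin k) → FA R k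
  | x, _, [] => x
  | x, n, a :: rest =>
      lbrkAux R k (x * wordElem R k [a] - ((-1 : R) ^ n) • (wordElem R k [a] * x)) (n + 1) rest

/-- The left-normed iterated bracket `[[⋯[[a₁,a₂],a₃],⋯],a_m]` of a list of letters. -/
def leftBracket (R : Type) [CommRing R] (k : ℕ) : List (Fin k) → FA R k
  | [] => 0
  | a :: rest => lbrkAux R k (wordElem R k [a]) 1 rest

/-- The Reutenauer basis `B_S` of `L_S`: left-normed brackets of enumerations of `S`
starting with the smallest element.  For a singleton `S = {a}` this is `{a}`. -/
def ReutSet (R : Type) [CommRing R] (k : ℕ) (S : Finset (Fin k)) : Set (FA R k) :=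
  {x | ∃ l : List (Fin k), l.Nodup ∧ l.toFinset = S ∧
        (∃ s t, l = s :: t ∧ ∀ a ∈ S, s ≤ a) ∧ x = leftBracket R k l}

/-- The disjoint union `B = ⊔_{∅ ≠ S ⊆ [k]} B_S`, as pairs `(S, P)` with `P ∈ B_S`. -/
def BIdx (R : Type) [CommRing R] (k : ℕ) : Type :=
  {p : Finset (Fin k) × FA R k // p.1.Nonempty ∧ p.2 ∈ ReutSet R k p.1}

/-- The set `Π` of ascending products `P₁ P₂ ⋯ P_m` over set partitions
`[k] = S₁ ⊔ ⋯ ⊔ S_m` with `P i ∈ B_{S i}`, ascending with respect to `r`. -/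
def PiSet (R : Type) [CommRing R] (k : ℕ) (r : BIdx R k → BIdx R k → Prop) :
    Set (FA R k) :=
  {x | ∃ (m : ℕ) (S : Fin m → Finset (Fin k)) (P : Fin m → FA R k)
        (h : ∀ i, (S i).Nonempty ∧ P i ∈ ReutSet R k (S i)),
      (∀ i j, i ≠ j → Disjoint (S i) (S j)) ∧
      Finset.univ.biUnion S = (Finset.univ : Finset (Fin k)) ∧
      (∀ i j : Fin m, i < j →
        r ⟨(S i, P i), h i⟩ ⟨(S j, P j), h j⟩ ∧ (S i, P i) ≠ (S j, P j)) ∧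
      x = (List.ofFn P).prod}

/-!
Every element of `Π` is a combination of injective words of length `k`, since a graded Lie
element on a block `S` is a combination of injective words with letter set `S`.

Conversely a word `a₁ ⋯ a_k` is the product of its letters, which lie in `B`. If two adjacent
factors `x y` of a product over an ordered partition are out of order, write
`x y = ± y x + [x, y]`: the first term has fewer inversions, and in the second the two blocks
merge into one, over which `[x, y]` is a combination of elements of `B` (graded Jacobi identity:
every Lie element on `S` is a combination of left-normed brackets starting with `min S`).
So `Π` spans.

Finally `Π` has at most `k!` elements: list the blocks of an ascending product by decreasing
minima, each read as the word starting with its minimum; the concatenation is an injective word,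
from which the blocks are recovered by cutting before each left-to-right minimum. A spanning set
of a free `ℤ`-module of rank `k!` with at most `k!` elements is a basis.
-/

section Lists

variable {α : Type*}

theorem List.exists_eq_append_cons_cons_of_not_isChain {r : α → α → Prop} :
    ∀ {l : List α}, ¬ l.IsChain r → ∃ A x y C, l = A ++ x :: y :: C ∧ ¬ r x y
  | [], h => absurd List.IsChain.nil h
  | [x], h => absurd (List.IsChain.singleton x) h
  | x :: y :: t, h => by
    rw [List.isChain_cons_cons] at h
    by_cases hxy : r x y
    · obtain ⟨A, x', y', C, hA, hr⟩ :=
        List.exists_eq_append_cons_cons_of_not_isChain fun hc => h ⟨hxy, hc⟩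
      exact ⟨x :: A, x', y', C, by rw [hA]; rfl, hr⟩
    · exact ⟨[], x, y, t, rfl, hxy⟩

def inversions (r : α → α → Prop) [DecidableRel r] : List α → ℕ
  | [] => 0
  | a :: l => l.countP (fun b => !decide (r a b)) + inversions r l

theorem inversions_swap_lt (r : α → α → Prop) [DecidableRel r] {x y : α}
    (hxy : ¬ r x y) (hyx : r y x) (A C : List α) :
    inversions r (A ++ y :: x :: C) < inversions r (A ++ x :: y :: C) := by
  induction A with
  | nil => simp [inversions, hxy, hyx]; omega
  | cons a A ih =>
    have hperm : (A ++ y :: x :: C).Perm (A ++ x :: y :: C) :=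
      .append_left A (.swap x y C)
    simp only [List.cons_append, inversions, hperm.countP_eq]
    omega

def IsOrderedPartition (l : List (Finset α)) : Prop :=
  l.Pairwise Disjoint ∧ ∀ a, ∃ s ∈ l, a ∈ s

theorem IsOrderedPartition.perm {l l' : List (Finset α)} (h : IsOrderedPartition l)
    (hl : l.Perm l') : IsOrderedPartition l' :=
  ⟨hl.pairwise h.1 fun {_ _} h => Disjoint.symm h,
    fun a => (h.2 a).imp fun _ hs => ⟨hl.mem_iff.mp hs.1, hs.2⟩⟩

theorem IsOrderedPartition.merge [DecidableEq α] {A C : List (Finset α)} {s t : Finset α}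
    (h : IsOrderedPartition (A ++ s :: t :: C)) : IsOrderedPartition (A ++ (s ∪ t) :: C) := by
  obtain ⟨hdisj, hcov⟩ := h
  refine ⟨?_, fun a => ?_⟩
  · simp only [List.pairwise_append, List.pairwise_cons, List.mem_cons, forall_eq_or_imp,
      Finset.disjoint_union_left, Finset.disjoint_union_right, forall_and] at hdisj ⊢
    tauto
  · obtain ⟨u, hu, hau⟩ := hcov a
    simp only [List.mem_append, List.mem_cons] at hu
    rcases hu with hu | rfl | rfl | hu
    · exact ⟨u, by simp [hu], hau⟩
    · exact ⟨u ∪ t, by simp, Finset.mem_union_left _ hau⟩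
    · exact ⟨s ∪ u, by simp, Finset.mem_union_right _ hau⟩
    · exact ⟨u, by simp [hu], hau⟩

theorem List.mem_foldr_union [DecidableEq α] {l : List (Finset α)} {a : α} :
    a ∈ l.foldr (· ∪ ·) ∅ ↔ ∃ s ∈ l, a ∈ s := by
  induction l <;> simp [*]

end Lists

section MinSegments

variable {α : Type*}

def joinSegments (segs : List (α × List α)) : List α :=
  segs.flatMap fun p => p.1 :: p.2

theorem nodup_joinSegments [DecidableEq α] {segs : List (α × List α)}
    (hnd : ∀ p ∈ segs, (p.1 :: p.2).Nodup)
    (hdisj : (segs.map fun p => (p.1 :: p.2).toFinset).Pairwise Disjoint) :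
    (joinSegments segs).Nodup := by
  rw [joinSegments, List.nodup_flatMap, List.pairwise_map] at *
  exact ⟨hnd, hdisj.imp List.disjoint_toFinset_iff_disjoint.mp⟩

theorem nodup_map_fst_of_pairwise_disjoint [DecidableEq α] {segs : List (α × List α)}
    (hdisj : (segs.map fun p => (p.1 :: p.2).toFinset).Pairwise Disjoint) :
    (segs.map Prod.fst).Nodup := by
  rw [List.Nodup, List.pairwise_map] at *
  refine hdisj.imp fun {p q} h hpq => ?_
  have hp : p.1 ∈ (p.1 :: p.2).toFinset := by simp
  have hq : p.1 ∈ (q.1 :: q.2).toFinset := by simp [hpq]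
  exact Finset.disjoint_left.mp h hp hq

variable [LinearOrder α]

theorem pairwise_map_fst_gt_mergeSort {segs : List (α × List α)}
    (h : (segs.map Prod.fst).Nodup) :
    ((segs.mergeSort fun p q => q.1 ≤ p.1).map Prod.fst).Pairwise (· > ·) := by
  have hsorted := List.pairwise_mergeSort (le := fun p q : α × List α => q.1 ≤ p.1)
    (fun _ _ _ h₁ h₂ => by simpa using (of_decide_eq_true h₂).trans (of_decide_eq_true h₁))
    (fun p q => by simpa using le_total q.1 p.1) segs
  have hnd :=
    ((List.mergeSort_perm segs fun p q => decide (q.1 ≤ p.1)).map Prod.fst).nodup_iff.mpr h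
  rw [List.Nodup, List.pairwise_map] at hnd
  rw [List.pairwise_map]
  exact (hsorted.and hnd).imp fun ⟨hle, hne⟩ => (of_decide_eq_true hle).lt_of_ne (Ne.symm hne)

def minSegments : List α → List (α × List α)
  | [] => []
  | a :: t => (a, t.takeWhile (a < ·)) :: minSegments (t.dropWhile (a < ·))
termination_by l => l.length
decreasing_by exact Nat.lt_succ_of_le (List.dropWhile_sublist _).length_le

theorem minSegments_joinSegments {segs : List (α × List α)}
    (htail : ∀ p ∈ segs, ∀ b ∈ p.2, p.1 < b)
    (hhead : (segs.map Prod.fst).Pairwise (· > ·)) :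
    minSegments (joinSegments segs) = segs := by
  induction segs with
  | nil => simp [minSegments, joinSegments]
  | cons p rest ih =>
    obtain ⟨a, t⟩ := p
    simp only [List.map_cons, List.pairwise_cons, List.mem_map] at hhead
    have hrest : (joinSegments rest).takeWhile (a < ·) = []
        ∧ (joinSegments rest).dropWhile (a < ·) = joinSegments rest := by
      rcases rest with _ | ⟨⟨a', t'⟩, rest⟩
      · simp [joinSegments]
      · have : ¬ a < a' := not_lt.mpr (hhead.1 a' ⟨_, List.mem_cons_self, rfl⟩).le
        simp [joinSegments, this]
    have ht : ∀ b ∈ t, decide (a < b) = true := fun b hb => by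
      simpa using htail (a, t) List.mem_cons_self b hb
    rw [joinSegments, List.flatMap_cons, List.cons_append, minSegments,
      List.takeWhile_append_of_pos ht, List.dropWhile_append_of_pos ht]
    rw [← joinSegments, hrest.1, hrest.2, List.append_nil,
      ih (fun q hq => htail q (List.mem_cons_of_mem _ hq)) hhead.2]

end MinSegments

theorem exists_basis_span_of_card_le_finrank {R M : Type*} [CommRing R] [OrzechProperty R]
    [AddCommGroup M] [Module R M] {s : Set M} [Finite s]
    (hcard : Nat.card s ≤ Module.finrank R (Submodule.span R s)) :
    ∃ b : Module.Basis s R (Submodule.span R s), ∀ p, (b p : M) = p := by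
  have := Fintype.ofFinite s
  let v : s → Submodule.span R s := fun p => ⟨p, Submodule.subset_span p.2⟩
  have hv : Set.range v = ((↑) : Submodule.span R s → M) ⁻¹' s := by
    ext ⟨x, hx⟩
    simp [v]
  have spans : ⊤ ≤ Submodule.span R (Set.range v) := by
    rw [hv, Submodule.span_span_coe_preimage]
  have hli := linearIndependent_of_top_le_span_of_card_le_finrank spans
    (by rwa [← Nat.card_eq_fintype_card])
  exact ⟨.mk hli spans, fun p => by simp [v]⟩

section Words

variable {R : Type} [CommRing R] {k : ℕ}

theorem wordElem_append (w v : List (Fin k)) :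
    wordElem R k (w ++ v) = wordElem R k w * wordElem R k v := by
  rw [wordElem, wordElem, wordElem, MonoidAlgebra.single_mul_single, one_mul]
  rfl

theorem wordElem_eq_prod (w : List (Fin k)) :
    wordElem R k w = (w.map fun a => wordElem R k [a]).prod := by
  induction w with
  | nil => rfl
  | cons a w ih => rw [List.map_cons, List.prod_cons, ← ih, ← wordElem_append]; rfl

theorem linearIndependent_wordElem : LinearIndependent R (wordElem R k) :=
  (MonoidAlgebra.basis (FreeMonoid (Fin k)) R).linearIndependent.comp FreeMonoid.ofList
    FreeMonoid.ofList.injective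

def wordsOn (R : Type) [CommRing R] (S : Finset (Fin k)) : Submodule R (FA R k) :=
  Submodule.span R (wordElem R k '' {w | w.Nodup ∧ w.toFinset = S})

theorem mul_mem_wordsOn {A B : Finset (Fin k)} (hAB : Disjoint A B) {x y : FA R k}
    (hx : x ∈ wordsOn R A) (hy : y ∈ wordsOn R B) : x * y ∈ wordsOn R (A ∪ B) := by
  have hxy : x * y ∈ wordsOn R A * wordsOn R B := Submodule.mul_mem_mul hx hy
  rw [wordsOn, wordsOn, Submodule.span_mul_span] at hxy
  refine Submodule.span_le.mpr ?_ hxy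
  rintro _ ⟨_, ⟨w, ⟨hw, rfl⟩, rfl⟩, _, ⟨v, ⟨hv, rfl⟩, rfl⟩, rfl⟩
  refine Submodule.subset_span ⟨w ++ v, ⟨?_, List.toFinset_append⟩, wordElem_append w v⟩
  refine List.nodup_append.mpr ⟨hw, hv, fun a ha b hb hab => ?_⟩
  subst hab
  exact Finset.disjoint_left.mp hAB (List.mem_toFinset.mpr ha) (List.mem_toFinset.mpr hb)

theorem IsLie.mem_wordsOn {S : Finset (Fin k)} {x : FA R k} (h : IsLie R k S x) :
    x ∈ wordsOn R S := by
  induction h with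
  | letter a => exact Submodule.subset_span ⟨[a], ⟨List.nodup_singleton a, rfl⟩, rfl⟩
  | @bracket A B p q hAB _ _ ihp ihq =>
    refine sub_mem (mul_mem_wordsOn hAB ihp ihq) (Submodule.smul_mem _ _ ?_)
    rw [Finset.union_comm]
    exact mul_mem_wordsOn hAB.symm ihq ihp

theorem IsLie.nonempty {S : Finset (Fin k)} {x : FA R k} (h : IsLie R k S x) : S.Nonempty := by
  induction h with
  | letter a => exact Finset.singleton_nonempty a
  | bracket _ _ _ ihp _ => exact ihp.mono Finset.subset_union_left

theorem wordsOn_univ_le : wordsOn R (Finset.univ : Finset (Fin k)) ≤ wordsLen R k k := by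
  refine Submodule.span_le.mpr ?_
  rintro _ ⟨w, ⟨hw, hwu⟩, rfl⟩
  refine Submodule.subset_span ⟨w, hw, ?_, rfl⟩
  rw [← List.toFinset_card_of_nodup hw, hwu, Finset.card_univ, Fintype.card_fin]

def injWords (k : ℕ) : Set (List (Fin k)) := {w | w.Nodup ∧ w.length = k}

theorem mem_injWords_iff {w : List (Fin k)} : w ∈ injWords k ↔ w.Nodup ∧ ∀ a, a ∈ w := by
  refine and_congr_right fun hw => ?_
  have := Finset.card_eq_iff_eq_univ w.toFinset
  rw [Fintype.card_fin] at this
  rw [← List.toFinset_card_of_nodup hw, this, Finset.eq_univ_iff_forall]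
  simp

theorem finite_injWords : (injWords k).Finite :=
  (List.finite_length_eq (Fin k) k).subset fun _ h => h.2

theorem finrank_wordsLen [Nontrivial R] :
    Module.finrank R (wordsLen R k k) = Nat.card (injWords k) := by
  have hli : LinearIndependent R fun w : injWords k => wordElem R k w :=
    linearIndependent_wordElem.comp _ Subtype.val_injective
  have hspan :
      wordsLen R k k = Submodule.span R (Set.range fun w : injWords k => wordElem R k w) := by
    rw [wordsLen]
    congr 1
    ext x
    simp [injWords, eq_comm, and_assoc]
  rw [hspan, Module.finrank_eq_nat_card_basis (Module.Basis.span hli)]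

end Words

section GradedBracket

variable {R A : Type*} [CommRing R] [Ring A] [Algebra R A]

theorem graded_bracket_swap (e : ℕ) (p q : A) :
    p * q - ((-1 : R) ^ e) • (q * p)
      = -(((-1 : R) ^ e) • (q * p - ((-1 : R) ^ e) • (p * q))) := by
  rw [smul_sub, smul_smul, ← pow_add, ← two_mul, pow_mul, neg_one_sq, one_pow, one_smul,
    neg_sub]

theorem graded_jacobi (l m n : ℕ) (p u v : A) :
    p * (u * v - ((-1 : R) ^ (m * n)) • (v * u))
        - ((-1 : R) ^ (l * (m + n))) • ((u * v - ((-1 : R) ^ (m * n)) • (v * u)) * p)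
      = ((p * u - ((-1 : R) ^ (l * m)) • (u * p)) * v
          - ((-1 : R) ^ ((l + m) * n)) • (v * (p * u - ((-1 : R) ^ (l * m)) • (u * p))))
        - ((-1 : R) ^ (m * n)) • ((p * v - ((-1 : R) ^ (l * n)) • (v * p)) * u
          - ((-1 : R) ^ ((l + n) * m)) • (u * (p * v - ((-1 : R) ^ (l * n)) • (v * p)))) := by
  rw [Nat.mul_add, Nat.add_mul, Nat.add_mul, Nat.mul_comm n m]
  simp only [pow_add]
  rcases neg_one_pow_eq_or R (l * m) with h₁ | h₁ <;>
  rcases neg_one_pow_eq_or R (l * n) with h₂ | h₂ <;>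
  rcases neg_one_pow_eq_or R (m * n) with h₃ | h₃ <;>
  · simp only [h₁, h₂, h₃, mul_one, mul_neg, neg_neg, neg_smul, one_smul]
    noncomm_ring

end GradedBracket

section LeftNormed

variable {R : Type} [CommRing R] {k : ℕ}

theorem lbrkAux_append_singleton (t : List (Fin k)) (x : FA R k) (n : ℕ) (a : Fin k) :
    lbrkAux R k x n (t ++ [a]) =
      lbrkAux R k x n t * wordElem R k [a]
        - ((-1 : R) ^ (n + t.length)) • (wordElem R k [a] * lbrkAux R k x n t) := by
  induction t generalizing x n with
  | nil => simp [lbrkAux]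
  | cons b t ih =>
    rw [List.cons_append, lbrkAux, lbrkAux, ih, List.length_cons, Nat.add_right_comm,
      Nat.add_assoc]

theorem leftBracket_cons_append_singleton (s : Fin k) (t : List (Fin k)) (a : Fin k) :
    leftBracket R k (s :: t ++ [a]) =
      leftBracket R k (s :: t) * wordElem R k [a]
        - ((-1 : R) ^ (s :: t).length) • (wordElem R k [a] * leftBracket R k (s :: t)) := by
  rw [List.cons_append, leftBracket, leftBracket, lbrkAux_append_singleton, List.length_cons,
    Nat.add_comm]

theorem IsLie.lbrkAux {S : Finset (Fin k)} {x : FA R k} (hx : IsLie R k S x) {t : List (Fin k)}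
    (ht : t.Nodup) (hSt : Disjoint S t.toFinset) :
    IsLie R k (S ∪ t.toFinset) (lbrkAux R k x S.card t) := by
  induction t generalizing S x with
  | nil => simpa [_root_.lbrkAux] using hx
  | cons a t ih =>
    rw [List.toFinset_cons, Finset.disjoint_insert_right] at hSt
    have hSa : Disjoint S {a} := Finset.disjoint_singleton_right.mpr hSt.1
    have hy := IsLie.bracket hSa hx (IsLie.letter a)
    rw [Finset.card_singleton, Nat.mul_one] at hy
    have hyt : Disjoint (S ∪ {a}) t.toFinset :=
      Finset.disjoint_union_left.mpr ⟨hSt.2, Finset.disjoint_singleton_left.mpr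
        fun ha => (List.nodup_cons.mp ht).1 (List.mem_toFinset.mp ha)⟩
    have := ih hy (List.nodup_cons.mp ht).2 hyt
    rwa [Finset.card_union_of_disjoint hSa, Finset.card_singleton, Finset.union_assoc,
      Finset.singleton_union, ← List.toFinset_cons] at this

theorem isLie_leftBracket {s : Fin k} {t : List (Fin k)} (h : (s :: t).Nodup) :
    IsLie R k (s :: t).toFinset (leftBracket R k (s :: t)) := by
  have := (IsLie.letter (R := R) s).lbrkAux (List.nodup_cons.mp h).2
    (Finset.disjoint_singleton_left.mpr fun hs =>
      (List.nodup_cons.mp h).1 (List.mem_toFinset.mp hs))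
  rwa [Finset.card_singleton, Finset.singleton_union, ← List.toFinset_cons] at this

theorem isLie_of_mem_reutSet {S : Finset (Fin k)} {x : FA R k} (hx : x ∈ ReutSet R k S) :
    IsLie R k S x := by
  obtain ⟨_, hnd, rfl, ⟨s, t, rfl, -⟩, rfl⟩ := hx
  exact isLie_leftBracket hnd

def leftNormedFrom (R : Type) [CommRing R] (s : Fin k) (S : Finset (Fin k)) : Set (FA R k) :=
  {x | ∃ t : List (Fin k),
    (s :: t).Nodup ∧ (s :: t).toFinset = S ∧ x = leftBracket R k (s :: t)}

end LeftNormed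

section Reutenauer

variable {R : Type} [CommRing R] {k : ℕ}

theorem leftBracket_append_singleton_mem_leftNormedFrom {s : Fin k} {A : Finset (Fin k)}
    {a : Fin k} (ha : a ∉ A) {x : FA R k} (hx : x ∈ leftNormedFrom R s A) :
    x * wordElem R k [a] - ((-1 : R) ^ A.card) • (wordElem R k [a] * x)
      ∈ leftNormedFrom R s (A ∪ {a}) := by
  obtain ⟨t, hnd, rfl, rfl⟩ := hx
  refine ⟨t ++ [a], ?_, ?_, ?_⟩
  · rw [← List.cons_append, List.nodup_append]
    exact ⟨hnd, List.nodup_singleton a, fun b hb c hc hbc =>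
      ha (List.mem_toFinset.mpr (List.eq_of_mem_singleton hc ▸ hbc ▸ hb))⟩
  · rw [← List.cons_append, List.toFinset_append]
    rfl
  · rw [← List.cons_append, leftBracket_cons_append_singleton, List.toFinset_card_of_nodup hnd]

theorem bracket_mem_span_leftNormedFrom {B : Finset (Fin k)} {q : FA R k} (hq : IsLie R k B q)
    {A : Finset (Fin k)} {s : Fin k} {p : FA R k} (hAB : Disjoint A B) (hs : s ∈ A)
    (hp : p ∈ Submodule.span R (leftNormedFrom R s A)) :
    p * q - ((-1 : R) ^ (A.card * B.card)) • (q * p)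
      ∈ Submodule.span R (leftNormedFrom R s (A ∪ B)) := by
  induction hq generalizing A p with
  | letter a =>
    let f : FA R k →ₗ[R] FA R k := LinearMap.mulRight R (wordElem R k [a])
      - ((-1 : R) ^ A.card) • LinearMap.mulLeft R (wordElem R k [a])
    have hf : ∀ x, f x = x * wordElem R k [a] - ((-1 : R) ^ A.card) • (wordElem R k [a] * x) :=
      fun _ => rfl
    rw [Finset.card_singleton, Nat.mul_one, ← hf]
    refine (Submodule.span_le (p := (Submodule.span R _).comap f)).mpr (fun x hx => ?_) hp
    rw [SetLike.mem_coe, Submodule.mem_comap, hf]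
    exact Submodule.subset_span (leftBracket_append_singleton_mem_leftNormedFrom
      (Finset.disjoint_singleton_right.mp hAB) hx)
  | @bracket U V u v hUV _ _ ihu ihv =>
    -- graded Jacobi: `[p, [u, v]] = [[p, u], v] ± [[p, v], u]`, and both terms are covered by
    -- the induction hypotheses on `u` and `v`
    rw [Finset.disjoint_union_right] at hAB
    have huv := ihv (Finset.disjoint_union_left.mpr ⟨hAB.2, hUV⟩) (Finset.mem_union_left _ hs)
      (ihu hAB.1 hs hp)
    have hvu := ihu (Finset.disjoint_union_left.mpr ⟨hAB.1, hUV.symm⟩)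
      (Finset.mem_union_left _ hs) (ihv hAB.2 hs hp)
    rw [Finset.card_union_of_disjoint hAB.1, Finset.union_assoc] at huv
    rw [Finset.card_union_of_disjoint hAB.2, Finset.union_assoc, Finset.union_comm V] at hvu
    rw [Finset.card_union_of_disjoint hUV, graded_jacobi]
    exact sub_mem huv (Submodule.smul_mem _ _ hvu)

theorem IsLie.mem_span_leftNormedFrom {S : Finset (Fin k)} {x : FA R k} (h : IsLie R k S x)
    {s : Fin k} (hs : s ∈ S) : x ∈ Submodule.span R (leftNormedFrom R s S) := by
  induction h with
  | letter a =>
    rw [Finset.mem_singleton.mp hs]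
    exact Submodule.subset_span ⟨[], List.nodup_singleton a, rfl, rfl⟩
  | @bracket A B p q hAB hp hq ihp ihq =>
    rcases Finset.mem_union.mp hs with hsA | hsB
    · exact bracket_mem_span_leftNormedFrom hq hAB hsA (ihp hsA)
    · rw [graded_bracket_swap, Finset.union_comm, Nat.mul_comm]
      exact neg_mem (Submodule.smul_mem _ _
        (bracket_mem_span_leftNormedFrom hp hAB.symm hsB (ihq hsB)))

theorem IsLie.mem_span_reutSet {S : Finset (Fin k)} {x : FA R k} (h : IsLie R k S x) :
    x ∈ Submodule.span R (ReutSet R k S) := by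
  have hS := h.nonempty
  refine Submodule.span_mono ?_ (h.mem_span_leftNormedFrom (S.min'_mem hS))
  rintro _ ⟨t, hnd, htS, rfl⟩
  exact ⟨_, hnd, htS, ⟨_, t, rfl, fun a ha => S.min'_le a ha⟩, rfl⟩

end Reutenauer

section Blocks

variable {R : Type} [CommRing R] {k : ℕ}

namespace BIdx

def mk (S : Finset (Fin k)) (x : FA R k) (h : S.Nonempty ∧ x ∈ ReutSet R k S) : BIdx R k :=
  ⟨(S, x), h⟩

def supp (b : BIdx R k) : Finset (Fin k) := b.1.1

def elem (b : BIdx R k) : FA R k := b.1.2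

theorem supp_nonempty (b : BIdx R k) : b.supp.Nonempty := b.2.1

theorem elem_mem_reutSet (b : BIdx R k) : b.elem ∈ ReutSet R k b.supp := b.2.2

@[simp]
theorem supp_mk {S : Finset (Fin k)} {x : FA R k} (h : S.Nonempty ∧ x ∈ ReutSet R k S) :
    supp (mk S x h) = S := rfl

@[simp]
theorem elem_mk {S : Finset (Fin k)} {x : FA R k} (h : S.Nonempty ∧ x ∈ ReutSet R k S) :
    elem (mk S x h) = x := rfl

end BIdx

def blockSupports (L : List (BIdx R k)) : List (Finset (Fin k)) := L.map BIdx.supp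

def blockProd (L : List (BIdx R k)) : FA R k := (L.map BIdx.elem).prod

theorem blockProd_append_cons (A C : List (BIdx R k)) (z : BIdx R k) :
    blockProd (A ++ z :: C) = blockProd A * z.elem * blockProd C := by
  simp [blockProd, mul_assoc]

theorem blockProd_append_cons_cons (A C : List (BIdx R k)) (x y : BIdx R k) (c : R) :
    blockProd (A ++ x :: y :: C) = c • blockProd (A ++ y :: x :: C)
      + blockProd A * (x.elem * y.elem - c • (y.elem * x.elem)) * blockProd C := by
  simp only [blockProd, List.map_append, List.map_cons, List.prod_append, List.prod_cons,
    mul_sub, sub_mul, mul_smul_comm, smul_mul_assoc, mul_assoc]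
  abel

theorem mem_PiSet_iff (r : BIdx R k → BIdx R k → Prop) {x : FA R k} :
    x ∈ PiSet R k r ↔ ∃ L : List (BIdx R k),
      IsOrderedPartition (blockSupports L) ∧ L.Pairwise r ∧ x = blockProd L := by
  constructor
  · rintro ⟨m, S, P, h, hdisj, hcover, hasc, rfl⟩
    refine ⟨List.ofFn fun i => BIdx.mk (S i) (P i) (h i), ⟨?_, fun a => ?_⟩, ?_, ?_⟩
    · rw [blockSupports, List.map_ofFn, List.pairwise_ofFn]
      exact fun i j hij => hdisj i j hij.ne
    · obtain ⟨i, -, hai⟩ := Finset.mem_biUnion.mp (hcover ▸ Finset.mem_univ a)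
      exact ⟨S i, by simp [blockSupports], hai⟩
    · exact List.pairwise_ofFn.mpr fun i j hij => (hasc i j hij).1
    · simp [blockProd, Function.comp_def]
  · rintro ⟨L, ⟨hdisj, hcov⟩, hsort, rfl⟩
    rw [blockSupports, List.pairwise_map, List.pairwise_iff_get] at hdisj
    rw [List.pairwise_iff_get] at hsort
    refine ⟨L.length, fun i => (L.get i).supp, fun i => (L.get i).elem,
      fun i => ⟨(L.get i).supp_nonempty, (L.get i).elem_mem_reutSet⟩,
      fun i j hij => ?_, ?_, fun i j hij => ⟨hsort i j hij, fun h => ?_⟩, ?_⟩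
    · rcases lt_or_gt_of_ne hij with hij | hij
      · exact hdisj i j hij
      · exact (hdisj j i hij).symm
    · refine Finset.eq_univ_of_forall fun a => ?_
      obtain ⟨_, hs, has⟩ := hcov a
      obtain ⟨b, hb, rfl⟩ := List.mem_map.mp hs
      obtain ⟨i, rfl⟩ := List.get_of_mem hb
      exact Finset.mem_biUnion.mpr ⟨i, Finset.mem_univ _, has⟩
    · have hij' := hdisj i j hij
      rw [show (L.get i).supp = (L.get j).supp from congrArg Prod.fst h, disjoint_self,
        Finset.bot_eq_empty] at hij'
      exact (L.get j).supp_nonempty.ne_empty hij'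
    · conv_lhs => rw [blockProd, ← List.ofFn_get L, List.map_ofFn]
      rfl

theorem blockProd_mem_wordsOn {L : List (BIdx R k)} (hL : (blockSupports L).Pairwise Disjoint) :
    blockProd L ∈ wordsOn R ((blockSupports L).foldr (· ∪ ·) ∅) := by
  induction L with
  | nil => exact Submodule.subset_span ⟨[], ⟨List.nodup_nil, rfl⟩, rfl⟩
  | cons b L ih =>
    rw [blockSupports, List.map_cons, List.pairwise_cons] at hL
    refine mul_mem_wordsOn (Finset.disjoint_left.mpr fun a hab haL => ?_)
      (isLie_of_mem_reutSet b.elem_mem_reutSet).mem_wordsOn (ih hL.2)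
    obtain ⟨s, hs, has⟩ := List.mem_foldr_union.mp haL
    exact Finset.disjoint_left.mp (hL.1 s hs) hab has

theorem PiSet_subset_wordsLen (r : BIdx R k → BIdx R k → Prop) :
    PiSet R k r ⊆ wordsLen R k k := by
  rintro _ h
  obtain ⟨L, hL, -, rfl⟩ := (mem_PiSet_iff r).mp h
  have hU : (blockSupports L).foldr (· ∪ ·) ∅ = Finset.univ :=
    Finset.eq_univ_of_forall fun a => List.mem_foldr_union.mpr (hL.2 a)
  exact wordsOn_univ_le (hU ▸ blockProd_mem_wordsOn hL.1)

end Blocks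

section Straightening

variable {R : Type} [CommRing R] {k : ℕ}

theorem bracket_mem_span_reutSet {x y : BIdx R k} (hxy : Disjoint x.supp y.supp) :
    x.elem * y.elem - ((-1 : R) ^ (x.supp.card * y.supp.card)) • (y.elem * x.elem)
      ∈ Submodule.span R (ReutSet R k (x.supp ∪ y.supp)) :=
  (IsLie.bracket hxy (isLie_of_mem_reutSet x.elem_mem_reutSet)
    (isLie_of_mem_reutSet y.elem_mem_reutSet)).mem_span_reutSet

open Classical in
theorem blockProd_mem_span_PiSet (r : BIdx R k → BIdx R k → Prop) [IsTrans (BIdx R k) r]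
    [Std.Total r] (L : List (BIdx R k)) (hL : IsOrderedPartition (blockSupports L)) :
    blockProd L ∈ Submodule.span R (PiSet R k r) := by
  by_cases hsort : L.IsChain r
  · exact Submodule.subset_span
      ((mem_PiSet_iff r).mpr ⟨L, hL, List.isChain_iff_pairwise.mp hsort, rfl⟩)
  obtain ⟨A, x, y, C, rfl, hxy⟩ := List.exists_eq_append_cons_cons_of_not_isChain hsort
  have hyx : r y x := (total_of r y x).resolve_right hxy
  have hL' : IsOrderedPartition (blockSupports A ++ x.supp :: y.supp :: C.map BIdx.supp) := by
    simpa [blockSupports] using hL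
  rw [blockProd_append_cons_cons A C x y ((-1 : R) ^ (x.supp.card * y.supp.card))]
  refine add_mem (Submodule.smul_mem _ _ (blockProd_mem_span_PiSet r (A ++ y :: x :: C) ?_)) ?_
  · exact hL.perm (by simpa [blockSupports] using .append_left _ (.swap _ _ _))
  let f : FA R k →ₗ[R] FA R k :=
    LinearMap.mulLeft R (blockProd A) ∘ₗ LinearMap.mulRight R (blockProd C)
  have hf : ∀ g, f g = blockProd A * g * blockProd C := fun g => (mul_assoc _ _ _).symm
  rw [← hf]
  have hdisj : Disjoint x.supp y.supp :=
    (List.pairwise_cons.mp (List.pairwise_append.mp hL'.1).2.1).1 _ List.mem_cons_self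
  refine (Submodule.span_le (p := (Submodule.span R _).comap f)).mpr (fun g hg => ?_)
    (bracket_mem_span_reutSet hdisj)
  let z : BIdx R k :=
    .mk (x.supp ∪ y.supp) g ⟨x.supp_nonempty.mono Finset.subset_union_left, hg⟩
  have hz := blockProd_mem_span_PiSet r (A ++ z :: C) (by simpa [blockSupports, z] using hL'.merge)
  rwa [blockProd_append_cons, ← hf] at hz
termination_by (L.length, inversions r L)
decreasing_by
  all_goals subst_vars
  · exact Prod.Lex.right' _ (by simp) (inversions_swap_lt r hxy hyx A C)
  · exact Prod.Lex.left _ _ (by simp)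

def BIdx.letter (R : Type) [CommRing R] (a : Fin k) : BIdx R k :=
  .mk {a} (wordElem R k [a])
    ⟨Finset.singleton_nonempty a,
      [a], List.nodup_singleton a, rfl, ⟨a, [], rfl, by simp⟩, rfl⟩

theorem wordsLen_le_span_PiSet (r : BIdx R k → BIdx R k → Prop) [IsTrans (BIdx R k) r]
    [Std.Total r] : wordsLen R k k ≤ Submodule.span R (PiSet R k r) := by
  refine Submodule.span_le.mpr ?_
  rintro _ ⟨w, hw, hlen, rfl⟩
  have hcov := (mem_injWords_iff.mp ⟨hw, hlen⟩).2
  have hL : IsOrderedPartition (blockSupports (w.map (BIdx.letter R))) := by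
    rw [blockSupports, List.map_map]
    refine ⟨?_, fun a =>
      ⟨{a}, List.mem_map.mpr ⟨a, hcov a, rfl⟩, Finset.mem_singleton_self a⟩⟩
    rw [List.pairwise_map]
    exact hw.imp fun hab => Finset.disjoint_singleton.mpr hab
  have := blockProd_mem_span_PiSet r _ hL
  rw [blockProd, List.map_map] at this
  rwa [wordElem_eq_prod]

end Straightening

section Counting

variable {R : Type} [CommRing R] {k : ℕ}

def segBlock (R : Type) [CommRing R] (p : Fin k × List (Fin k)) : Finset (Fin k) × FA R k :=
  ((p.1 :: p.2).toFinset, leftBracket R k (p.1 :: p.2))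

def BIdx.toPair (b : BIdx R k) : Finset (Fin k) × FA R k := (b.supp, b.elem)

theorem BIdx.toPair_injective : Function.Injective (BIdx.toPair (R := R) (k := k)) :=
  fun _ _ h => Subtype.ext h

theorem BIdx.exists_segment (b : BIdx R k) :
    ∃ p : Fin k × List (Fin k),
      (p.1 :: p.2).Nodup ∧ (∀ c ∈ p.2, p.1 < c) ∧ segBlock R p = b.toPair := by
  obtain ⟨_, hnd, hS, ⟨s, t, rfl, hmin⟩, he⟩ := b.elem_mem_reutSet
  refine ⟨(s, t), hnd, fun c hc => (hmin c ?_).lt_of_ne ?_, ?_⟩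
  · simp [← hS, hc]
  · rintro rfl
    exact (List.nodup_cons.mp hnd).1 hc
  · exact Prod.ext hS he.symm

def IsSegmentation (segs : List (Fin k × List (Fin k))) (L : List (BIdx R k)) : Prop :=
  (∀ p ∈ segs, ∀ c ∈ p.2, p.1 < c) ∧ (segs.map Prod.fst).Pairwise (· > ·) ∧
    (segs.map (segBlock R)).Perm (L.map BIdx.toPair)

theorem IsSegmentation.eq_of_joinSegments_eq (r : BIdx R k → BIdx R k → Prop) [Std.Antisymm r]
    {segs segs' : List (Fin k × List (Fin k))} {L L' : List (BIdx R k)}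
    (h : IsSegmentation segs L) (h' : IsSegmentation segs' L') (hL : L.Pairwise r)
    (hL' : L'.Pairwise r) (hj : joinSegments segs = joinSegments segs') : L = L' := by
  have hsegs : segs = segs' := by
    rw [← minSegments_joinSegments h.1 h.2.1, ← minSegments_joinSegments h'.1 h'.2.1, hj]
  subst hsegs
  exact ((List.map_perm_map_iff BIdx.toPair_injective).mp (h.2.2.symm.trans h'.2.2)).eq_of_pairwise'
    hL hL'

theorem exists_isSegmentation {L : List (BIdx R k)} (hL : IsOrderedPartition (blockSupports L)) :
    ∃ segs, IsSegmentation segs L ∧ joinSegments segs ∈ injWords k := by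
  choose seg hnd hlt hseg using BIdx.exists_segment (R := R) (k := k)
  have hpart₀ : IsOrderedPartition ((L.map seg).map fun p => (p.1 :: p.2).toFinset) := by
    have : L.map ((fun p => (p.1 :: p.2).toFinset) ∘ seg) = blockSupports L :=
      List.map_congr_left fun b _ => congrArg Prod.fst (hseg b)
    rwa [List.map_map, this]
  let segs := (L.map seg).mergeSort fun p q => q.1 ≤ p.1
  have hperm : segs.Perm (L.map seg) := List.mergeSort_perm _ _
  have hmem : ∀ p ∈ segs, ∃ b, p = seg b := fun p hp => by
    obtain ⟨b, -, rfl⟩ := List.mem_map.mp (hperm.mem_iff.mp hp)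
    exact ⟨b, rfl⟩
  have hpart := hpart₀.perm (hperm.map _).symm
  refine ⟨segs, ⟨fun p hp => ?_, pairwise_map_fst_gt_mergeSort
    (nodup_map_fst_of_pairwise_disjoint hpart₀.1), ?_⟩, ?_⟩
  · obtain ⟨b, rfl⟩ := hmem p hp
    exact hlt b
  · refine (hperm.map _).trans ?_
    have : L.map (segBlock R ∘ seg) = L.map BIdx.toPair := List.map_congr_left fun b _ => hseg b
    rw [List.map_map, this]
  · refine mem_injWords_iff.mpr ⟨nodup_joinSegments (fun p hp => ?_) hpart.1, fun a => ?_⟩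
    · obtain ⟨b, rfl⟩ := hmem p hp
      exact hnd b
    · obtain ⟨_, hs, has⟩ := hpart.2 a
      obtain ⟨p, hp, rfl⟩ := List.mem_map.mp hs
      exact List.mem_flatMap.mpr ⟨p, hp, List.mem_toFinset.mp has⟩

theorem exists_injective_PiSet_injWords (r : BIdx R k → BIdx R k → Prop) [Std.Antisymm r] :
    ∃ f : PiSet R k r → injWords k, Function.Injective f := by
  have key : ∀ x : PiSet R k r, ∃ L : List (BIdx R k), ∃ segs, L.Pairwise r ∧
      x.1 = blockProd L ∧ IsSegmentation segs L ∧ joinSegments segs ∈ injWords k := by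
    intro x
    obtain ⟨L, hL, hsort, hx⟩ := (mem_PiSet_iff r).mp x.2
    obtain ⟨segs, hsegs⟩ := exists_isSegmentation (R := R) hL
    exact ⟨L, segs, hsort, hx, hsegs⟩
  choose L segs hsort hx hsegs hword using key
  refine ⟨fun x => ⟨joinSegments (segs x), hword x⟩, fun x y hxy => Subtype.ext ?_⟩
  rw [hx x, hx y, (hsegs x).eq_of_joinSegments_eq r (hsegs y) (hsort x) (hsort y)
    (congrArg Subtype.val hxy)]

end Counting

theorem PiSet_basis_of_words_general (k : ℕ) (r : BIdx ℤ k → BIdx ℤ k → Prop)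
    (hr : IsLinearOrder (BIdx ℤ k) r) :
    ∃ b : Module.Basis ↥(PiSet ℤ k r) ℤ ↥(wordsLen ℤ k k),
      ∀ p : ↥(PiSet ℤ k r), (b p).val = p.val := by
  have hspan : Submodule.span ℤ (PiSet ℤ k r) = wordsLen ℤ k k :=
    le_antisymm (Submodule.span_le.mpr (PiSet_subset_wordsLen r)) (wordsLen_le_span_PiSet r)
  obtain ⟨f, hf⟩ := exists_injective_PiSet_injWords (R := ℤ) r
  have : Finite (injWords k) := finite_injWords.to_subtype
  have : Finite (PiSet ℤ k r) := Finite.of_injective f hf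
  rw [← hspan]
  refine exists_basis_span_of_card_le_finrank ?_
  rw [hspan, finrank_wordsLen]
  exact Nat.card_le_card_of_injective f hf

/-- For any total order on `B = ⊔ B_S`, the set `Π` of ascending products of Reutenauer
basis elements is a ℤ-basis of `C_{k-1}^{(k)}`. -/
theorem PiSet_basis_of_words (k : ℕ) (hk : 2 ≤ k) (r : BIdx ℤ k → BIdx ℤ k → Prop)
    (hr : IsLinearOrder (BIdx ℤ k) r) :
    ∃ b : Module.Basis ↥(PiSet ℤ k r) ℤ ↥(wordsLen ℤ k k),
      ∀ p : ↥(PiSet ℤ k r), (b p).val = p.val :=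
  PiSet_basis_of_words_general k r hr
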